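/- arXiv:math/0212248 — 3 statements merged into one kernel-verified Lean document; each statement's English description precedes it below -/
import Mathlib

section
/- Let 𝒜 = {H_1, …, H_d} be an essential affine line arrangement in ℂ² (d distinct affine lines whose normal directions span ℂ²), with H_i = {ℓ_i = 0} for affine-linear forms ℓ_i, and set f = ∏_{i=1}^d ℓ_i ∈ ℂ[x_0, x_1]. Then f is M-tame: for every sequence (z^k) of points of M(f) = {x ∈ ℂ² : grad f(x) = c·x̄ for some c ∈ ℂ} with ‖z^k‖ → ∞, one has |f(z^k)| → ∞. -/
open Filter

/-- The affine-linear polynomial `ℓ i = b i + ∑ t, (a i t) * X t` defining the line `H i`. -/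
noncomputable def lineEq {d : ℕ} (a : Fin d → Fin 2 → ℂ) (b : Fin d → ℂ) (i : Fin d) :
    MvPolynomial (Fin 2) ℂ :=
  MvPolynomial.C (b i) + ∑ t : Fin 2, MvPolynomial.C (a i t) * MvPolynomial.X t

/-- The set `M(g) = {x : grad g (x) = c·x̄ for some c ∈ ℂ}`. -/
def Mset {N : ℕ} (g : MvPolynomial (Fin N) ℂ) : Set (Fin N → ℂ) :=
  {x | ∃ c : ℂ, ∀ j, MvPolynomial.eval x (MvPolynomial.pderiv j g) = c * (starRingEnd ℂ) (x j)}

/-- `g` is M-tame: along any sequence in `M(g)` with `‖z^k‖ → ∞` one has `|g(z^k)| → ∞`. -/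
def MTame {N : ℕ} (g : MvPolynomial (Fin N) ℂ) : Prop :=
  ∀ z : ℕ → (Fin N → ℂ), (∀ k, z k ∈ Mset g) →
    Tendsto (fun k => ‖z k‖) atTop atTop →
    Tendsto (fun k => ‖MvPolynomial.eval (z k) g‖) atTop atTop


open Finset Topology

namespace Stmt1Aux

/-- bilinear dot product on `Fin 2 → ℂ` -/
def dot (x y : Fin 2 → ℂ) : ℂ := x 0 * y 0 + x 1 * y 1

lemma dot_smul_left (c : ℂ) (x y : Fin 2 → ℂ) : dot (c • x) y = c * dot x y := by
  simp [dot]; ring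

/-- value of the affine form -/
noncomputable def lv {d : ℕ} (a : Fin d → Fin 2 → ℂ) (b : Fin d → ℂ) (j : Fin d)
    (x : Fin 2 → ℂ) : ℂ := b j + dot (a j) x

lemma eval_lineEq {d : ℕ} (a : Fin d → Fin 2 → ℂ) (b : Fin d → ℂ) (j : Fin d) (x : Fin 2 → ℂ) :
    MvPolynomial.eval x (lineEq a b j) = lv a b j x := by
  simp [lineEq, lv, dot, Fin.sum_univ_two]

lemma eval_prod_lineEq {d : ℕ} (a : Fin d → Fin 2 → ℂ) (b : Fin d → ℂ) (x : Fin 2 → ℂ) :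
    MvPolynomial.eval x (∏ i : Fin d, lineEq a b i) = ∏ i : Fin d, lv a b i x := by
  rw [map_prod]
  exact Finset.prod_congr rfl fun j _ => eval_lineEq a b j x

lemma pderiv_finset_prod {ι : Type*} [DecidableEq ι] (s : Finset ι)
    (g : ι → MvPolynomial (Fin 2) ℂ) (t : Fin 2) :
    MvPolynomial.pderiv t (∏ i ∈ s, g i)
      = ∑ i ∈ s, MvPolynomial.pderiv t (g i) * ∏ j ∈ s.erase i, g j := by
  induction s using Finset.induction_on with
  | empty => simp
  | insert n s' hns ih =>
    rw [Finset.prod_insert hns, MvPolynomial.pderiv_mul, ih, Finset.sum_insert hns,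
      Finset.erase_insert hns, Finset.mul_sum]
    congr 1
    refine Finset.sum_congr rfl fun i hi => ?_
    have hin : i ≠ n := fun h => hns (h ▸ hi)
    rw [Finset.erase_insert_of_ne hin.symm, Finset.prod_insert (fun h => hns (Finset.mem_of_mem_erase h))]
    ring

lemma pderiv_lineEq {d : ℕ} (a : Fin d → Fin 2 → ℂ) (b : Fin d → ℂ) (j : Fin d) (t : Fin 2) :
    MvPolynomial.pderiv t (lineEq a b j) = MvPolynomial.C (a j t) := by
  rw [lineEq]
  rw [map_add, MvPolynomial.pderiv_C, map_sum]
  rw [Fin.sum_univ_two]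
  fin_cases t <;>
    simp [MvPolynomial.pderiv_X, Pi.single_apply]

lemma eval_pderiv_prod {d : ℕ} (a : Fin d → Fin 2 → ℂ) (b : Fin d → ℂ) (t : Fin 2)
    (x : Fin 2 → ℂ) :
    MvPolynomial.eval x (MvPolynomial.pderiv t (∏ i : Fin d, lineEq a b i))
      = ∑ j : Fin d, a j t * ∏ m ∈ univ.erase j, lv a b m x := by
  rw [pderiv_finset_prod]
  rw [map_sum]
  refine Finset.sum_congr rfl fun j _ => ?_
  rw [map_mul, pderiv_lineEq, MvPolynomial.eval_C, map_prod]
  exact congrArg _ (Finset.prod_congr rfl fun m _ => eval_lineEq a b m x)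


/-- perp vector -/
def perp (u : Fin 2 → ℂ) : Fin 2 → ℂ := ![u 1, -u 0]

lemma dot_perp (u : Fin 2 → ℂ) : dot (perp u) u = 0 := by simp [dot, perp]; ring

lemma exists_lam {u v : Fin 2 → ℂ} (hu : u ≠ 0) (hv : dot v u = 0) :
    ∃ lam : ℂ, v = lam • perp u := by
  by_cases h0 : u 0 = 0
  · have h1 : u 1 ≠ 0 := by
      intro h1; apply hu; funext t; fin_cases t <;> simp [h0, h1]
    have hv1 : v 1 = 0 := by
      have : v 1 * u 1 = 0 := by simpa [dot, h0] using hv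
      exact (mul_eq_zero.1 this).resolve_right h1
    exact ⟨v 0 / u 1, by funext t; fin_cases t <;> simp [perp, hv1, h0, h1] <;> field_simp⟩
  · refine ⟨-(v 1) / u 0, ?_⟩
    have hv0 : v 0 * u 0 = -(v 1 * u 1) := by
      have := hv; rw [dot] at this; linear_combination this
    funext t; fin_cases t
    · show v 0 = -(v 1) / u 0 * u 1
      field_simp
      linear_combination hv0
    · show v 1 = -(v 1) / u 0 * (-u 0)
      field_simp

lemma exists_dot_ne {d : ℕ} (a : Fin d → Fin 2 → ℂ)
    (hess : Submodule.span ℂ (Set.range a) = (⊤ : Submodule ℂ (Fin 2 → ℂ)))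
    {u : Fin 2 → ℂ} (hu : u ≠ 0) : ∃ j, dot (a j) u ≠ 0 := by
  by_contra h
  push_neg at h
  set φ : (Fin 2 → ℂ) →ₗ[ℂ] ℂ :=
    { toFun := fun v => dot v u
      map_add' := fun x y => by simp [dot]; ring
      map_smul' := fun c x => by simp [dot]; ring } with hφ
  have hrange : Set.range a ⊆ (LinearMap.ker φ : Set (Fin 2 → ℂ)) := by
    rintro _ ⟨j, rfl⟩; exact h j
  have hle : (⊤ : Submodule ℂ (Fin 2 → ℂ)) ≤ LinearMap.ker φ := by
    rw [← hess]; exact Submodule.span_le.2 hrange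
  have hsu : φ (star u) = 0 := hle (Submodule.mem_top)
  have : (starRingEnd ℂ) (u 0) * u 0 + (starRingEnd ℂ) (u 1) * u 1 = 0 := by
    simpa [hφ, dot] using hsu
  rw [mul_comm _ (u 0), mul_comm _ (u 1), Complex.mul_conj, Complex.mul_conj] at this
  have h0 : Complex.normSq (u 0) + Complex.normSq (u 1) = 0 := by exact_mod_cast this
  have hn0 : Complex.normSq (u 0) = 0 ∧ Complex.normSq (u 1) = 0 := by
    constructor <;> nlinarith [Complex.normSq_nonneg (u 0), Complex.normSq_nonneg (u 1)]
  apply hu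
  funext t; fin_cases t
  · exact Complex.normSq_eq_zero.1 hn0.1
  · exact Complex.normSq_eq_zero.1 hn0.2

/-- d ≥ 1 from essentialness -/
lemma d_pos {d : ℕ} (a : Fin d → Fin 2 → ℂ)
    (hess : Submodule.span ℂ (Set.range a) = (⊤ : Submodule ℂ (Fin 2 → ℂ))) : 0 < d := by
  rcases Nat.eq_zero_or_pos d with h | h
  · exfalso
    subst h
    have : Set.range a = ∅ := Set.range_eq_empty a
    rw [this] at hess
    rw [Submodule.span_empty] at hess
    exact absurd hess bot_ne_top
  · exact h


variable {d : ℕ} (a : Fin d → Fin 2 → ℂ) (b : Fin d → ℂ)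

lemma nu_tendsto (y : ℕ → Fin 2 → ℂ) (hn : Tendsto (fun k => ‖y k‖) atTop atTop) :
    Tendsto (fun k => ((‖y k‖ : ℂ))⁻¹) atTop (𝓝 0) := by
  have h1 : Tendsto (fun k => (‖y k‖)⁻¹) atTop (𝓝 (0:ℝ)) := tendsto_inv_atTop_zero.comp hn
  have h2 := (Complex.continuous_ofReal.tendsto 0).comp h1
  simpa [Function.comp_def, Complex.ofReal_inv] using h2

lemma lv_tendsto {y : ℕ → Fin 2 → ℂ} {u : Fin 2 → ℂ}
    (hdir : ∀ t, Tendsto (fun k => y k t * ((‖y k‖ : ℂ))⁻¹) atTop (𝓝 (u t)))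
    (hn : Tendsto (fun k => ‖y k‖) atTop atTop) (j : Fin d) :
    Tendsto (fun k => lv a b j (y k) * ((‖y k‖ : ℂ))⁻¹) atTop (𝓝 (dot (a j) u)) := by
  have heq : ∀ k, lv a b j (y k) * ((‖y k‖ : ℂ))⁻¹
      = b j * ((‖y k‖ : ℂ))⁻¹
        + (a j 0 * (y k 0 * ((‖y k‖ : ℂ))⁻¹) + a j 1 * (y k 1 * ((‖y k‖ : ℂ))⁻¹)) := by
    intro k; rw [lv, dot]; ring
  have hlim : Tendsto (fun k => b j * ((‖y k‖ : ℂ))⁻¹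
        + (a j 0 * (y k 0 * ((‖y k‖ : ℂ))⁻¹) + a j 1 * (y k 1 * ((‖y k‖ : ℂ))⁻¹)))
      atTop (𝓝 (b j * 0 + (a j 0 * u 0 + a j 1 * u 1))) := by
    exact (((nu_tendsto y hn).const_mul _).add
      (((hdir 0).const_mul _).add ((hdir 1).const_mul _)))
  have : b j * 0 + (a j 0 * u 0 + a j 1 * u 1) = dot (a j) u := by rw [dot]; ring
  rw [this] at hlim
  exact hlim.congr (fun k => (heq k).symm)

lemma prodG_tendsto {y : ℕ → Fin 2 → ℂ} {u : Fin 2 → ℂ}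
    (hdir : ∀ t, Tendsto (fun k => y k t * ((‖y k‖ : ℂ))⁻¹) atTop (𝓝 (u t)))
    (hn : Tendsto (fun k => ‖y k‖) atTop atTop) (G : Finset (Fin d)) :
    Tendsto (fun k => (∏ m ∈ G, lv a b m (y k)) * (((‖y k‖ : ℂ))⁻¹) ^ G.card)
      atTop (𝓝 (∏ m ∈ G, dot (a m) u)) := by
  have h := tendsto_finset_prod (f := fun m k => lv a b m (y k) * ((‖y k‖ : ℂ))⁻¹)
    (a := fun m => dot (a m) u) G (fun m _ => lv_tendsto a b hdir hn m)
  refine h.congr fun k => ?_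
  rw [Finset.prod_mul_distrib, Finset.prod_const]

lemma prodG_abs_atTop {y : ℕ → Fin 2 → ℂ} {u : Fin 2 → ℂ}
    (hdir : ∀ t, Tendsto (fun k => y k t * ((‖y k‖ : ℂ))⁻¹) atTop (𝓝 (u t)))
    (hn : Tendsto (fun k => ‖y k‖) atTop atTop) {G : Finset (Fin d)}
    (hG : G.Nonempty) (hGne : ∀ m ∈ G, dot (a m) u ≠ 0) :
    Tendsto (fun k => ‖∏ m ∈ G, lv a b m (y k)‖) atTop atTop := by
  set τ := ∏ m ∈ G, dot (a m) u with hτdef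
  have hτ : τ ≠ 0 := Finset.prod_ne_zero_iff.2 hGne
  have hτa : 0 < ‖τ‖ := norm_pos_iff.mpr hτ
  have habs : Tendsto (fun k => ‖(∏ m ∈ G, lv a b m (y k))
      * (((‖y k‖ : ℂ))⁻¹) ^ G.card‖) atTop (𝓝 (‖τ‖)) :=
    (continuous_norm.tendsto τ).comp (prodG_tendsto a b hdir hn G)
  have hev1 : ∀ᶠ k in atTop, ‖τ‖ / 2 ≤ ‖(∏ m ∈ G, lv a b m (y k))
      * (((‖y k‖ : ℂ))⁻¹) ^ G.card‖ :=
    habs.eventually (eventually_ge_nhds (by linarith))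
  have hev2 : ∀ᶠ k in atTop, 1 ≤ ‖y k‖ := hn.eventually_ge_atTop 1
  have hgrow : Tendsto (fun k => (‖τ‖ / 2) * ‖y k‖ ^ G.card) atTop atTop :=
    ((tendsto_pow_atTop (Finset.card_ne_zero.2 hG)).comp hn).const_mul_atTop (by linarith)
  refine tendsto_atTop_mono' _ ?_ hgrow
  filter_upwards [hev1, hev2] with k h1 h2
  have hpos : (0:ℝ) < ‖y k‖ := by linarith
  have habs_eq : ‖(∏ m ∈ G, lv a b m (y k)) * (((‖y k‖ : ℂ))⁻¹) ^ G.card‖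
      = ‖∏ m ∈ G, lv a b m (y k)‖ * ((‖y k‖)⁻¹) ^ G.card := by
    rw [norm_mul, norm_pow, norm_inv, Complex.norm_real, Real.norm_of_nonneg hpos.le]
  rw [habs_eq] at h1
  have hx : (0:ℝ) < ‖y k‖ ^ G.card := by positivity
  calc ‖τ‖ / 2 * ‖y k‖ ^ G.card
      ≤ (‖∏ m ∈ G, lv a b m (y k)‖ * ((‖y k‖)⁻¹) ^ G.card) * ‖y k‖ ^ G.card := by
        exact mul_le_mul_of_nonneg_right h1 (le_of_lt hx)
    _ = ‖∏ m ∈ G, lv a b m (y k)‖ := by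
        rw [mul_assoc, ← mul_pow, inv_mul_cancel₀ (ne_of_gt hpos), one_pow, mul_one]


lemma caseA (hd : 0 < d) {y : ℕ → Fin 2 → ℂ} {u : Fin 2 → ℂ}
    (hdir : ∀ t, Tendsto (fun k => y k t * ((‖y k‖ : ℂ))⁻¹) atTop (𝓝 (u t)))
    (hn : Tendsto (fun k => ‖y k‖) atTop atTop)
    (hA : ∀ j, dot (a j) u ≠ 0) (C : ℝ)
    (hC : ∀ k, ‖∏ j : Fin d, lv a b j (y k)‖ ≤ C) : False := by
  have huniv : (univ : Finset (Fin d)).Nonempty := univ_nonempty_iff.2 ⟨⟨0, hd⟩⟩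
  have hbig := prodG_abs_atTop a b hdir hn huniv (fun m _ => hA m)
  obtain ⟨k, hk⟩ := (hbig.eventually_ge_atTop (C + 1)).exists
  have := hC k
  linarith

lemma wbound (ha : ∀ i, a i ≠ 0)
    (hess : Submodule.span ℂ (Set.range a) = (⊤ : Submodule ℂ (Fin 2 → ℂ)))
    {y : ℕ → Fin 2 → ℂ} {u : Fin 2 → ℂ} (hu : u ≠ 0)
    (i : Fin d) (hi : dot (a i) u = 0)
    (hdir : ∀ t, Tendsto (fun k => y k t * ((‖y k‖ : ℂ))⁻¹) atTop (𝓝 (u t)))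
    (hn : Tendsto (fun k => ‖y k‖) atTop atTop) (C : ℝ)
    (hC : ∀ k, ‖∏ j : Fin d, lv a b j (y k)‖ ≤ C) :
    ∃ B, ∀ᶠ k in atTop, ‖dot (perp u) (y k)‖ ≤ B := by
  classical
  have hC0 : 0 ≤ C := le_trans (by positivity) (hC 0)
  set S : Finset (Fin d) := univ.filter (fun j => dot (a j) u = 0) with hSdef
  set T : Finset (Fin d) := univ.filter (fun j => ¬ dot (a j) u = 0) with hTdef
  have hiS : i ∈ S := by simp [hSdef, hi]
  have hTne : T.Nonempty := by
    obtain ⟨j, hj⟩ := exists_dot_ne a hess hu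
    exact ⟨j, by simp [hTdef, hj]⟩
  have hTbig := prodG_abs_atTop a b hdir hn hTne (fun m hm => by
    simpa [hTdef] using (Finset.mem_filter.1 hm).2)
  -- lam choice
  set lam : Fin d → ℂ := fun j => if h : dot (a j) u = 0 then (exists_lam hu h).choose else 0
    with hlamdef
  have hlam : ∀ j, dot (a j) u = 0 → a j = lam j • perp u := by
    intro j h
    simp only [hlamdef, dif_pos h]
    exact (exists_lam hu h).choose_spec
  have hlam0 : ∀ j, dot (a j) u = 0 → lam j ≠ 0 := by
    intro j h hz
    exact ha j (by rw [hlam j h, hz, zero_smul])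
  have hlvS : ∀ j, dot (a j) u = 0 → ∀ x, lv a b j x = lam j * dot (perp u) x + b j := by
    intro j h x
    rw [lv, hlam j h, dot_smul_left]; ring
  -- the bound
  set B : ℝ := ∑ j ∈ S, (C + 1 + ‖b j‖) / ‖lam j‖ with hBdef
  have hBj : ∀ j ∈ S, (C + 1 + ‖b j‖) / ‖lam j‖ ≤ B := by
    intro j hj
    exact Finset.single_le_sum (f := fun j => (C + 1 + ‖b j‖) / ‖lam j‖)
      (fun m _ => by positivity) hj
  refine ⟨B, ?_⟩
  filter_upwards [hTbig.eventually_ge_atTop 1] with k hk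
  by_contra hgt
  push_neg at hgt
  -- each S-factor is large
  have hSfac : ∀ j ∈ S, C + 1 ≤ ‖lv a b j (y k)‖ := by
    intro j hj
    have hdj : dot (a j) u = 0 := by simpa [hSdef] using (Finset.mem_filter.1 hj).2
    have hlj : ‖lam j‖ ≠ 0 := by
      simpa [norm_eq_zero] using hlam0 j hdj
    have hljpos : 0 < ‖lam j‖ := lt_of_le_of_ne (by positivity) (Ne.symm hlj)
    have h1 : (C + 1 + ‖b j‖) / ‖lam j‖ ≤ ‖dot (perp u) (y k)‖ :=
      le_of_lt (lt_of_le_of_lt (hBj j hj) hgt)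
    have h2 : C + 1 + ‖b j‖ ≤ ‖lam j‖ * ‖dot (perp u) (y k)‖ := by
      rw [div_le_iff₀ hljpos] at h1; linarith [h1]
    have h3 : ‖lam j * dot (perp u) (y k)‖
        ≤ ‖lam j * dot (perp u) (y k) + b j‖ + ‖b j‖ := by
      have h4 := norm_add_le (lam j * dot (perp u) (y k) + b j) (-(b j))
      simpa using h4
    rw [hlvS j hdj]
    rw [norm_mul] at h3
    linarith
  have hSprod : C + 1 ≤ ∏ j ∈ S, ‖lv a b j (y k)‖ := by
    have h1le : (1:ℝ) ≤ ∏ j ∈ S.erase i, ‖lv a b j (y k)‖ := by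
      have := Finset.prod_le_prod (s := S.erase i) (f := fun _ => (1:ℝ))
        (g := fun j => ‖lv a b j (y k)‖)
        (fun _ _ => zero_le_one)
        (fun j hj => le_trans (by show (1:ℝ) ≤ C + 1; linarith) (hSfac j (Finset.mem_of_mem_erase hj)))
      simpa using this
    calc C + 1 ≤ ‖lv a b i (y k)‖ := hSfac i hiS
      _ ≤ ‖lv a b i (y k)‖ * ∏ j ∈ S.erase i, ‖lv a b j (y k)‖ :=
          le_mul_of_one_le_right (by positivity) h1le
      _ = ∏ j ∈ S, ‖lv a b j (y k)‖ :=
          Finset.mul_prod_erase S (fun j => ‖lv a b j (y k)‖) hiS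
  have hsplit : (∏ j ∈ S, ‖lv a b j (y k)‖) * ∏ j ∈ T, ‖lv a b j (y k)‖
      = ‖∏ j : Fin d, lv a b j (y k)‖ := by
    rw [← norm_prod, ← norm_prod, ← norm_mul]
    congr 1
    exact Finset.prod_filter_mul_prod_filter_not univ _ _
  have habsT : ‖∏ m ∈ T, lv a b m (y k)‖ = ∏ j ∈ T, ‖lv a b j (y k)‖ :=
    norm_prod _ _
  rw [habsT] at hk
  have hle : (∏ j ∈ S, ‖lv a b j (y k)‖) ≤ C := by
    calc (∏ j ∈ S, ‖lv a b j (y k)‖)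
        ≤ (∏ j ∈ S, ‖lv a b j (y k)‖) * ∏ j ∈ T, ‖lv a b j (y k)‖ :=
          le_mul_of_one_le_right (Finset.prod_nonneg fun _ _ => by positivity) hk
      _ = ‖∏ j : Fin d, lv a b j (y k)‖ := hsplit
      _ ≤ C := hC k
  linarith


lemma key (ha : ∀ i, a i ≠ 0)
    (hdist : ∀ i j : Fin d, i ≠ j →
      {x : Fin 2 → ℂ | MvPolynomial.eval x (lineEq a b i) = 0} ≠
      {x : Fin 2 → ℂ | MvPolynomial.eval x (lineEq a b j) = 0})
    (hess : Submodule.span ℂ (Set.range a) = (⊤ : Submodule ℂ (Fin 2 → ℂ)))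
    {y : ℕ → Fin 2 → ℂ} (c : ℕ → ℂ)
    (hM : ∀ k t, (∑ j : Fin d, a j t * ∏ m ∈ univ.erase j, lv a b m (y k))
            = c k * (starRingEnd ℂ) (y k t))
    (hn : Tendsto (fun k => ‖y k‖) atTop atTop)
    {u : Fin 2 → ℂ} (hu : u ≠ 0)
    (hdir : ∀ t, Tendsto (fun k => y k t * ((‖y k‖ : ℂ))⁻¹) atTop (𝓝 (u t)))
    (wst : ℂ) (hw : Tendsto (fun k => dot (perp u) (y k)) atTop (𝓝 wst))
    (C : ℝ) (hC : ∀ k, ‖∏ j : Fin d, lv a b j (y k)‖ ≤ C) : False := by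
  classical
  set ν : ℕ → ℂ := fun k => ((‖y k‖ : ℂ))⁻¹ with hνdef
  set P : Fin d → ℕ → ℂ := fun j k => ∏ m ∈ univ.erase j, lv a b m (y k) with hPdef
  set S : Finset (Fin d) := univ.filter (fun j => dot (a j) u = 0) with hSdef
  set T : Finset (Fin d) := univ.filter (fun j => ¬ dot (a j) u = 0) with hTdef
  have hTne : T.Nonempty := by
    obtain ⟨j, hj⟩ := exists_dot_ne a hess hu
    exact ⟨j, by simp [hTdef, hj]⟩
  set R : ℕ := T.card with hRdef
  -- lam
  set lam : Fin d → ℂ := fun j => if h : dot (a j) u = 0 then (exists_lam hu h).choose else 0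
    with hlamdef
  have hlam : ∀ j, dot (a j) u = 0 → a j = lam j • perp u := by
    intro j h
    simp only [hlamdef, dif_pos h]
    exact (exists_lam hu h).choose_spec
  have hlam0 : ∀ j, dot (a j) u = 0 → lam j ≠ 0 := by
    intro j h hz
    exact ha j (by rw [hlam j h, hz, zero_smul])
  have hlvS : ∀ j, dot (a j) u = 0 → ∀ x, lv a b j x = lam j * dot (perp u) x + b j := by
    intro j h x
    rw [lv, hlam j h, dot_smul_left]; ring
  -- splitting of products
  have hsplit : ∀ j k, P j k
      = (∏ m ∈ S.erase j, lv a b m (y k)) * (∏ m ∈ T.erase j, lv a b m (y k)) := by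
    intro j k
    show (∏ m ∈ univ.erase j, lv a b m (y k)) = _
    have h1 : (univ.erase j).filter (fun m => dot (a m) u = 0) = S.erase j := by
      ext m; simp only [hSdef, Finset.mem_filter, Finset.mem_erase, Finset.mem_univ,
        and_true, true_and]
      try tauto
    have h2 : (univ.erase j).filter (fun m => ¬ dot (a m) u = 0) = T.erase j := by
      ext m; simp only [hTdef, Finset.mem_filter, Finset.mem_erase, Finset.mem_univ,
        and_true, true_and]
      try tauto
    rw [← Finset.prod_filter_mul_prod_filter_not (univ.erase j) (fun m => dot (a m) u = 0),
      h1, h2]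
  have hTerase : ∀ j ∈ S, T.erase j = T := by
    intro j hj
    apply Finset.erase_eq_of_notMem
    simp only [hTdef, Finset.mem_filter]
    simp only [hSdef, Finset.mem_filter] at hj
    tauto
  have hSerase : ∀ j ∈ T, S.erase j = S := by
    intro j hj
    apply Finset.erase_eq_of_notMem
    simp only [hSdef, Finset.mem_filter]
    simp only [hTdef, Finset.mem_filter] at hj
    tauto
  -- limits
  set τc : ℂ := ∏ m ∈ T, dot (a m) u with hτdef
  have hτc : τc ≠ 0 := Finset.prod_ne_zero_iff.2 fun m hm => by
    simpa [hTdef] using (Finset.mem_filter.1 hm).2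
  have hQ : Tendsto (fun k => (∏ m ∈ T, lv a b m (y k)) * ν k ^ R) atTop (𝓝 τc) :=
    prodG_tendsto a b hdir hn T
  have hTbig : Tendsto (fun k => ‖∏ m ∈ T, lv a b m (y k)‖) atTop atTop :=
    prodG_abs_atTop a b hdir hn hTne (fun m hm => by
      simpa [hTdef] using (Finset.mem_filter.1 hm).2)
  have hSprodlim : ∀ G : Finset (Fin d), (∀ m ∈ G, dot (a m) u = 0) →
      Tendsto (fun k => ∏ m ∈ G, lv a b m (y k)) atTop
        (𝓝 (∏ m ∈ G, (lam m * wst + b m))) := by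
    intro G hG
    have h1 := tendsto_finset_prod (f := fun m k => lam m * dot (perp u) (y k) + b m)
      (a := fun m => lam m * wst + b m) G (fun m _ => (hw.const_mul _).add_const _)
    refine h1.congr fun k => ?_
    exact Finset.prod_congr rfl fun m hm => (hlvS m (hG m hm) (y k)).symm
  have hSmem : ∀ m ∈ S, dot (a m) u = 0 := fun m hm => by
    simpa [hSdef] using (Finset.mem_filter.1 hm).2
  -- pinf = 0
  set pinf : ℂ := ∏ m ∈ S, (lam m * wst + b m) with hpdef
  have hp0 : pinf = 0 := by
    have hpk := hSprodlim S hSmem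
    have habs : Tendsto (fun k => ‖∏ m ∈ S, lv a b m (y k)‖) atTop
        (𝓝 (‖pinf‖)) := (continuous_norm.tendsto _).comp hpk
    have hub : ∀ᶠ k in atTop, ‖∏ m ∈ S, lv a b m (y k)‖
        ≤ C / ‖∏ m ∈ T, lv a b m (y k)‖ := by
      filter_upwards [hTbig.eventually_ge_atTop 1] with k hk
      rw [le_div_iff₀ (by linarith)]
      calc ‖∏ m ∈ S, lv a b m (y k)‖ * ‖∏ m ∈ T, lv a b m (y k)‖
          = ‖(∏ m ∈ S, lv a b m (y k)) * ∏ m ∈ T, lv a b m (y k)‖ :=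
            (norm_mul _ _).symm
        _ = ‖∏ j : Fin d, lv a b j (y k)‖ := by
            rw [Finset.prod_filter_mul_prod_filter_not univ (fun m => dot (a m) u = 0)]
        _ ≤ C := hC k
    have hCz : Tendsto (fun k => C / ‖∏ m ∈ T, lv a b m (y k)‖) atTop (𝓝 0) :=
      tendsto_const_nhds.div_atTop hTbig
    have h0 : Tendsto (fun k => ‖∏ m ∈ S, lv a b m (y k)‖) atTop (𝓝 0) :=
      squeeze_zero' (Eventually.of_forall fun k => by positivity) hub hCz
    have := tendsto_nhds_unique habs h0
    exact norm_eq_zero.1 this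
  obtain ⟨j0, hj0S, hj0⟩ := Finset.prod_eq_zero_iff.1 hp0
  have hj0dot : dot (a j0) u = 0 := hSmem j0 hj0S
  -- simple roots
  have hzs : ∀ j, j ∈ S → lam j * wst + b j = 0 →
      {x : Fin 2 → ℂ | MvPolynomial.eval x (lineEq a b j) = 0}
        = {x : Fin 2 → ℂ | dot (perp u) x = wst} := by
    intro j hj hz
    have hdj := hSmem j hj
    ext x
    simp only [Set.mem_setOf_eq, eval_lineEq, hlvS j hdj x]
    have hb : b j = -(lam j * wst) := by linear_combination hz
    rw [hb]
    constructor
    · intro h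
      have : lam j * (dot (perp u) x - wst) = 0 := by linear_combination h
      rcases mul_eq_zero.1 this with h' | h'
      · exact absurd h' (hlam0 j hdj)
      · linear_combination h'
    · intro h; rw [h]; ring
  have hsimple : ∀ m ∈ S.erase j0, lam m * wst + b m ≠ 0 := by
    intro m hm hz
    exact hdist m j0 (Finset.ne_of_mem_erase hm)
      (by rw [hzs m (Finset.mem_of_mem_erase hm) hz, hzs j0 hj0S hj0])
  set q : ℂ := ∏ m ∈ S.erase j0, (lam m * wst + b m) with hqdef
  have hq0 : q ≠ 0 := Finset.prod_ne_zero_iff.2 hsimple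
  -- limit of P j0 * ν ^ R
  have hPj0 : Tendsto (fun k => P j0 k * ν k ^ R) atTop (𝓝 (q * τc)) := by
    have h1 := (hSprodlim (S.erase j0)
      (fun m hm => hSmem m (Finset.mem_of_mem_erase hm))).mul hQ
    refine h1.congr fun k => ?_
    rw [hsplit j0 k, hTerase j0 hj0S]
    ring
  -- limits of the other P j * ν ^ R
  have hPsmall : ∀ j, j ≠ j0 → Tendsto (fun k => P j k * ν k ^ R) atTop (𝓝 0) := by
    intro j hne
    by_cases hjS : dot (a j) u = 0
    · have hjmem : j ∈ S := by simp [hSdef, hjS]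
      have h1 := (hSprodlim (S.erase j)
        (fun m hm => hSmem m (Finset.mem_of_mem_erase hm))).mul hQ
      have hz : (∏ m ∈ S.erase j, (lam m * wst + b m)) * τc = 0 := by
        rw [Finset.prod_eq_zero (Finset.mem_erase.2 ⟨Ne.symm hne, hj0S⟩) hj0, zero_mul]
      rw [hz] at h1
      refine h1.congr fun k => ?_
      rw [hsplit j k, hTerase j hjmem]
      ring
    · have hjT : j ∈ T := by simp [hTdef, hjS]
      have hcard : (T.erase j).card + 1 = R := by
        rw [hRdef]; exact Finset.card_erase_add_one hjT
      have h1 := ((hSprodlim S hSmem).mul (prodG_tendsto a b hdir hn (T.erase j))).mul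
        (nu_tendsto y hn)
      rw [← hpdef, hp0] at h1
      have hz : (0 : ℂ) * (∏ m ∈ T.erase j, dot (a m) u) * 0 = 0 := by ring
      rw [hz] at h1
      refine h1.congr fun k => ?_
      rw [hsplit j k, hSerase j hjT, ← hcard, pow_succ]
      ring
  -- conj limits
  have hct : ∀ t, Tendsto (fun k => (starRingEnd ℂ) (y k t) * ν k) atTop
      (𝓝 ((starRingEnd ℂ) (u t))) := by
    intro t
    have h1 := (continuous_star.tendsto (u t)).comp (hdir t)
    refine h1.congr fun k => ?_
    show (starRingEnd ℂ) (y k t * ν k) = (starRingEnd ℂ) (y k t) * ν k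
    rw [map_mul]
    congr 1
    rw [hνdef]
    simp [map_inv₀, Complex.conj_ofReal]
  set h : ℕ → ℂ := fun k => u 0 * (starRingEnd ℂ) (y k 0) + u 1 * (starRingEnd ℂ) (y k 1)
    with hhdef
  set η : ℂ := u 0 * (starRingEnd ℂ) (u 0) + u 1 * (starRingEnd ℂ) (u 1) with hηdef
  have hη : η ≠ 0 := by
    intro h0
    have h1 : ((Complex.normSq (u 0) + Complex.normSq (u 1) : ℝ) : ℂ) = 0 := by
      rw [hηdef] at h0
      rw [Complex.ofReal_add, ← Complex.mul_conj, ← Complex.mul_conj]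
      exact h0
    have h2 : Complex.normSq (u 0) + Complex.normSq (u 1) = 0 := by exact_mod_cast h1
    have h20 : Complex.normSq (u 0) = 0 := by
      nlinarith [Complex.normSq_nonneg (u 0), Complex.normSq_nonneg (u 1)]
    have h21 : Complex.normSq (u 1) = 0 := by
      nlinarith [Complex.normSq_nonneg (u 0), Complex.normSq_nonneg (u 1)]
    apply hu
    funext t; fin_cases t
    · exact Complex.normSq_eq_zero.1 h20
    · exact Complex.normSq_eq_zero.1 h21
  have hh : Tendsto (fun k => h k * ν k) atTop (𝓝 η) := by
    have h1 := ((hct 0).const_mul (u 0)).add ((hct 1).const_mul (u 1))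
    refine h1.congr fun k => ?_
    rw [hhdef]; ring
  -- c k * h k * ν ^ R → 0
  have hck : ∀ k, c k * h k = ∑ j : Fin d, dot (a j) u * P j k := by
    intro k
    calc c k * h k = u 0 * (c k * (starRingEnd ℂ) (y k 0))
          + u 1 * (c k * (starRingEnd ℂ) (y k 1)) := by rw [hhdef]; ring
      _ = u 0 * (∑ j : Fin d, a j 0 * P j k) + u 1 * (∑ j : Fin d, a j 1 * P j k) := by
          rw [hM k 0, hM k 1]
      _ = ∑ j : Fin d, dot (a j) u * P j k := by
          rw [Finset.mul_sum, Finset.mul_sum, ← Finset.sum_add_distrib]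
          exact Finset.sum_congr rfl fun j _ => by rw [dot]; ring
  have hch : Tendsto (fun k => c k * h k * ν k ^ R) atTop (𝓝 0) := by
    have h1 : Tendsto (fun k => ∑ j : Fin d, dot (a j) u * (P j k * ν k ^ R)) atTop
        (𝓝 (∑ _j : Fin d, (0:ℂ))) := by
      refine tendsto_finset_sum _ fun j _ => ?_
      by_cases hje : j = j0
      · subst hje
        have : ∀ k, dot (a j) u * (P j k * ν k ^ R) = 0 := fun k => by
          rw [hj0dot, zero_mul]
        simpa [this] using tendsto_const_nhds (α := ℂ) (f := atTop (α := ℕ))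
      · have := (hPsmall j hje).const_mul (dot (a j) u)
        simpa using this
    simp only [Finset.sum_const_zero] at h1
    refine h1.congr fun k => ?_
    rw [hck k, Finset.sum_mul]
    exact Finset.sum_congr rfl fun j _ => by ring
  -- γ → 0
  have hMne : ∀ᶠ k in atTop, ((‖y k‖ : ℂ)) ≠ 0 := by
    filter_upwards [hn.eventually_ge_atTop 1] with k hk
    simp only [ne_eq, Complex.ofReal_eq_zero]
    linarith
  have hhne : ∀ᶠ k in atTop, h k * ν k ≠ 0 := hh.eventually_ne hη
  have hγ : Tendsto (fun k => c k * (‖y k‖ : ℂ) * ν k ^ R) atTop (𝓝 0) := by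
    have h1 := hch.mul (hh.inv₀ hη)
    rw [zero_mul] at h1
    refine (Tendsto.congr' ?_ h1)
    filter_upwards [hMne, hhne] with k hk1 hk2
    have hν0 : ν k ≠ 0 := by rw [hνdef]; exact inv_ne_zero hk1
    have hhk : h k ≠ 0 := fun hz => hk2 (by rw [hz, zero_mul])
    have hMν : (‖y k‖ : ℂ) * ν k = 1 := mul_inv_cancel₀ hk1
    rw [← div_eq_mul_inv, div_eq_iff hk2]
    symm
    calc c k * (‖y k‖ : ℂ) * ν k ^ R * (h k * ν k)
        = c k * h k * ν k ^ R * ((‖y k‖ : ℂ) * ν k) := by ring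
      _ = c k * h k * ν k ^ R := by rw [hMν, mul_one]
  -- final contradiction
  have hzero : ∀ t, a j0 t = 0 := by
    intro t
    have hL : Tendsto (fun k => (∑ j : Fin d, a j t * P j k) * ν k ^ R) atTop
        (𝓝 (a j0 t * (q * τc))) := by
      have h1 : Tendsto (fun k => (∑ j ∈ univ.erase j0, a j t * (P j k * ν k ^ R))
          + a j0 t * (P j0 k * ν k ^ R)) atTop (𝓝 (0 + a j0 t * (q * τc))) := by
        refine Tendsto.add ?_ (hPj0.const_mul _)
        have h2 : Tendsto (fun k => ∑ j ∈ univ.erase j0, a j t * (P j k * ν k ^ R)) atTop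
            (𝓝 (∑ _j ∈ univ.erase j0, (0:ℂ))) := by
          refine tendsto_finset_sum _ fun j hj => ?_
          have := (hPsmall j (Finset.ne_of_mem_erase hj)).const_mul (a j t)
          simpa using this
        simpa using h2
      rw [zero_add] at h1
      refine h1.congr fun k => ?_
      rw [Finset.sum_mul, ← Finset.sum_erase_add univ _ (Finset.mem_univ j0)]
      congr 1
      · exact Finset.sum_congr rfl fun j _ => by ring
      · ring
    have hR2 : Tendsto (fun k => (∑ j : Fin d, a j t * P j k) * ν k ^ R) atTop (𝓝 0) := by
      have h1 := hγ.mul (hct t)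
      rw [zero_mul] at h1
      refine Tendsto.congr' ?_ h1
      filter_upwards [hMne] with k hk
      have hMν : (‖y k‖ : ℂ) * ν k = 1 := mul_inv_cancel₀ hk
      calc c k * (‖y k‖ : ℂ) * ν k ^ R * ((starRingEnd ℂ) (y k t) * ν k)
          = (c k * (starRingEnd ℂ) (y k t)) * ν k ^ R * ((‖y k‖ : ℂ) * ν k) := by ring
        _ = (c k * (starRingEnd ℂ) (y k t)) * ν k ^ R := by rw [hMν, mul_one]
        _ = (∑ j : Fin d, a j t * P j k) * ν k ^ R := by rw [← hM k t]
    have := tendsto_nhds_unique hL hR2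
    rcases mul_eq_zero.1 this with h' | h'
    · exact h'
    · exact absurd h' (mul_ne_zero hq0 hτc)
  exact ha j0 (funext fun t => hzero t)


end Stmt1Aux

open Stmt1Aux in
/-- the defining polynomial `f = ∏ i, ℓ i` of an essential affine arrangement of
`d` distinct lines in `ℂ²` is M-tame. -/
theorem stmt1 (d : ℕ) (a : Fin d → Fin 2 → ℂ) (b : Fin d → ℂ)
    (ha : ∀ i, a i ≠ 0)
    (hdist : ∀ i j : Fin d, i ≠ j →
      {x : Fin 2 → ℂ | MvPolynomial.eval x (lineEq a b i) = 0} ≠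
      {x : Fin 2 → ℂ | MvPolynomial.eval x (lineEq a b j) = 0})
    (hess : Submodule.span ℂ (Set.range a) = (⊤ : Submodule ℂ (Fin 2 → ℂ))) :
    MTame (∏ i : Fin d, lineEq a b i) := by
  intro z hz hnz
  by_contra hcon
  rw [tendsto_atTop] at hcon
  push_neg at hcon
  obtain ⟨C, hC⟩ := hcon
  have hC' : ∃ᶠ k in atTop, ‖MvPolynomial.eval (z k) (∏ i : Fin d, lineEq a b i)‖ ≤ C := by
    refine hC.mono fun k hk => ?_
    exact le_of_lt hk
  obtain ⟨φ1, hφ1, hφ1C⟩ := Filter.extraction_of_frequently_atTop hC'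
  -- step 1 : the subsequence with bounded |f|
  set y1 : ℕ → Fin 2 → ℂ := z ∘ φ1 with hy1
  have hz1 : ∀ k, y1 k ∈ Mset (∏ i : Fin d, lineEq a b i) := fun k => hz (φ1 k)
  have hn1 : Tendsto (fun k => ‖y1 k‖) atTop atTop := hnz.comp hφ1.tendsto_atTop
  have hC1 : ∀ k, ‖∏ j : Fin d, lv a b j (y1 k)‖ ≤ C := fun k => by
    have := hφ1C k
    rwa [eval_prod_lineEq] at this
  -- step 2 : shift so that norms are ≥ 1
  obtain ⟨N, hN⟩ := eventually_atTop.1 (hn1.eventually_ge_atTop 1)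
  set y2 : ℕ → Fin 2 → ℂ := fun k => y1 (k + N) with hy2
  have hz2 : ∀ k, y2 k ∈ Mset (∏ i : Fin d, lineEq a b i) := fun k => hz1 (k + N)
  have hn2 : Tendsto (fun k => ‖y2 k‖) atTop atTop := hn1.comp (tendsto_add_atTop_nat N)
  have hC2 : ∀ k, ‖∏ j : Fin d, lv a b j (y2 k)‖ ≤ C := fun k => hC1 (k + N)
  have hge2 : ∀ k, 1 ≤ ‖y2 k‖ := fun k => hN (k + N) (Nat.le_add_left N k)
  -- step 3 : direction subsequence
  set v : ℕ → Fin 2 → ℂ := fun k => (‖y2 k‖)⁻¹ • y2 k with hv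
  have hvs : ∀ k, v k ∈ Metric.sphere (0 : Fin 2 → ℂ) 1 := by
    intro k
    rw [mem_sphere_zero_iff_norm, hv]
    have h1 : (0:ℝ) < ‖y2 k‖ := lt_of_lt_of_le one_pos (hge2 k)
    rw [norm_smul]
    simp [abs_of_pos (inv_pos.2 h1), inv_mul_cancel₀ (ne_of_gt h1)]
  obtain ⟨u, huS, φ2, hφ2, hvu⟩ := (isCompact_sphere (0 : Fin 2 → ℂ) 1).tendsto_subseq hvs
  have hu : u ≠ 0 := by
    rw [mem_sphere_zero_iff_norm] at huS
    intro h0; rw [h0] at huS; simp at huS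
  set y3 : ℕ → Fin 2 → ℂ := fun k => y2 (φ2 k) with hy3
  have hz3 : ∀ k, y3 k ∈ Mset (∏ i : Fin d, lineEq a b i) := fun k => hz2 (φ2 k)
  have hn3 : Tendsto (fun k => ‖y3 k‖) atTop atTop := hn2.comp hφ2.tendsto_atTop
  have hC3 : ∀ k, ‖∏ j : Fin d, lv a b j (y3 k)‖ ≤ C := fun k => hC2 (φ2 k)
  have hdir3 : ∀ t, Tendsto (fun k => y3 k t * ((‖y3 k‖ : ℂ))⁻¹) atTop (𝓝 (u t)) := by
    intro t
    have h1 : Tendsto (fun k => (v ∘ φ2) k t) atTop (𝓝 (u t)) := by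
      exact (tendsto_pi_nhds.1 hvu) t
    refine h1.congr fun k => ?_
    show v (φ2 k) t = y3 k t * ((‖y3 k‖ : ℂ))⁻¹
    rw [hv]
    simp only [Pi.smul_apply, Complex.real_smul, Complex.ofReal_inv]
    ring
  -- case split
  by_cases hA : ∀ j, dot (a j) u ≠ 0
  · exact caseA a b (d_pos a hess) hdir3 hn3 hA C hC3
  · push_neg at hA
    obtain ⟨i, hi⟩ := hA
    obtain ⟨B, hB⟩ := wbound a b ha hess hu i hi hdir3 hn3 C hC3
    obtain ⟨N2, hN2⟩ := eventually_atTop.1 hB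
    set y4 : ℕ → Fin 2 → ℂ := fun k => y3 (k + N2) with hy4
    have hz4 : ∀ k, y4 k ∈ Mset (∏ i : Fin d, lineEq a b i) := fun k => hz3 (k + N2)
    have hn4 : Tendsto (fun k => ‖y4 k‖) atTop atTop := hn3.comp (tendsto_add_atTop_nat N2)
    have hC4 : ∀ k, ‖∏ j : Fin d, lv a b j (y4 k)‖ ≤ C := fun k => hC3 (k + N2)
    have hdir4 : ∀ t, Tendsto (fun k => y4 k t * ((‖y4 k‖ : ℂ))⁻¹) atTop (𝓝 (u t)) :=
      fun t => (hdir3 t).comp (tendsto_add_atTop_nat N2)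
    have hwb4 : ∀ k, dot (perp u) (y4 k) ∈ Metric.closedBall (0 : ℂ) B := by
      intro k
      rw [Metric.mem_closedBall, Complex.dist_eq, sub_zero]
      exact hN2 (k + N2) (Nat.le_add_left N2 k)
    obtain ⟨wst, _, φ3, hφ3, hwlim⟩ := (isCompact_closedBall (0 : ℂ) B).tendsto_subseq hwb4
    set y5 : ℕ → Fin 2 → ℂ := fun k => y4 (φ3 k) with hy5
    have hz5 : ∀ k, y5 k ∈ Mset (∏ i : Fin d, lineEq a b i) := fun k => hz4 (φ3 k)
    have hn5 : Tendsto (fun k => ‖y5 k‖) atTop atTop := hn4.comp hφ3.tendsto_atTop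
    have hC5 : ∀ k, ‖∏ j : Fin d, lv a b j (y5 k)‖ ≤ C := fun k => hC4 (φ3 k)
    have hdir5 : ∀ t, Tendsto (fun k => y5 k t * ((‖y5 k‖ : ℂ))⁻¹) atTop (𝓝 (u t)) :=
      fun t => (hdir4 t).comp hφ3.tendsto_atTop
    have hw5 : Tendsto (fun k => dot (perp u) (y5 k)) atTop (𝓝 wst) := hwlim
    choose c hc using hz5
    have hM : ∀ k t, (∑ j : Fin d, a j t * ∏ m ∈ univ.erase j, lv a b m (y5 k))
        = c k * (starRingEnd ℂ) (y5 k t) := by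
      intro k t
      rw [← eval_pderiv_prod a b t (y5 k)]
      exact hc k t
    exact key a b ha hdist hess c hM hn5 hu hdir5 wst hw5 C hC5
end

section
/- Let 𝒜 = {H_1, …, H_d} be an essential affine hyperplane arrangement in ℂ^{n+1}, with H_i = {ℓ_i = 0} for affine-linear forms ℓ_i, let e_1, …, e_d be positive integers, set f_e = ∏_{i=1}^d ℓ_i^{e_i} and d_e = e_1 + … + e_d, and let X = ∪_i H_i = f_e^{-1}(0). Assume either n > 1, or n = 1 and d_e > d. Then f_e is M_0-tame: for every sequence (z^k) of points of M(f_e) \ X with ‖z^k‖ → ∞, where M(f_e) = {x ∈ ℂ^{n+1} : grad f_e(x) = c·x̄ for some c ∈ ℂ}, one has |f_e(z^k)| → ∞. -/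
/-!
Suppose `f_e` stayed bounded along some ultrafilter refining `atTop`. Along it `z_k / ‖z_k‖`
converges to a unit vector `u`, and every `ℓ_i(z_k)` either converges to some `γ_i` or escapes to
infinity. Bounded forms satisfy `a_i ⬝ u = 0`, so essentiality forces an unbounded one, and then
boundedness of `f_e = ∏ ℓ_i ^ e_i` forces `γ_i = 0` for some bounded form.

On `M(f_e) \ X` the logarithmic gradient `v = ∑ e_i a_i / ℓ_i` equals `μ • z̄`; pairing it with
`u` shows `μ ‖z_k‖ → 0`, hence `v(z_k) → 0`. Pairing `v(z_k)` instead with small vectors `w_k → 0`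
solving `a_i ⬝ w_k = ℓ_i(z_k) - γ_i` on the bounded forms gives the limit `∑_{γ_i = 0} e_i`,
which must therefore vanish, contradicting `e_i > 0`.
-/

open Filter

/-- The affine-linear polynomial `ℓ i = b i + ∑ t, (a i t) * X t` defining the hyperplane `H i`
in `ℂ^N`. -/
noncomputable def hypEq {N d : ℕ} (a : Fin d → Fin N → ℂ) (b : Fin d → ℂ) (i : Fin d) :
    MvPolynomial (Fin N) ℂ :=
  MvPolynomial.C (b i) + ∑ t : Fin N, MvPolynomial.C (a i t) * MvPolynomial.X t

open MvPolynomial Topology Bornology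

theorem Ultrafilter.tendsto_nhds_or_tendsto_cobounded {α E : Type*} [PseudoMetricSpace E]
    [ProperSpace E] (U : Ultrafilter α) (g : α → E) :
    (∃ x, Tendsto g U (𝓝 x)) ∨ Tendsto g U (cobounded E) := by
  refine or_iff_not_imp_right.2 fun h => ?_
  obtain ⟨s, hs, hgs⟩ : ∃ s ∈ cobounded E, g ⁻¹' s ∉ U := by
    simpa [Tendsto, Filter.le_def] using h
  have hsc : g ⁻¹' sᶜ ∈ U := U.compl_mem_iff_notMem.2 hgs
  have hbdd : IsBounded sᶜ := isBounded_def.2 (by simpa using hs)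
  obtain ⟨x, -, hx⟩ := hbdd.isCompact_closure.ultrafilter_le_nhds' (U.map g)
    (mem_of_superset (Ultrafilter.mem_map.2 hsc) subset_closure)
  exact ⟨x, hx⟩

theorem Ultrafilter.exists_finset_tendsto_nhds_and_tendsto_cobounded {ι α E : Type*} [Fintype ι]
    [PseudoMetricSpace E] [ProperSpace E] (U : Ultrafilter α) (g : ι → α → E) :
    ∃ (B : Finset ι) (γ : ι → E), (∀ i ∈ B, Tendsto (g i) U (𝓝 (γ i))) ∧
      ∀ i ∉ B, Tendsto (g i) U (cobounded E) := by
  classical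
  obtain ⟨k⟩ := U.neBot.nonempty
  have h : ∀ i, ∃ γ, Tendsto (g i) U (𝓝 γ) ∨ Tendsto (g i) U (cobounded E) := fun i =>
    (U.tendsto_nhds_or_tendsto_cobounded (g i)).elim (fun ⟨γ, hγ⟩ => ⟨γ, .inl hγ⟩)
      fun h => ⟨g i k, .inr h⟩
  choose γ hγ using h
  refine ⟨Finset.univ.filter fun i => Tendsto (g i) U (𝓝 (γ i)), γ, fun i hi => by simpa using hi,
    fun i hi => (hγ i).resolve_left (by simpa using hi)⟩

theorem Ultrafilter.exists_norm_eq_one_tendsto_inv_norm_smul {α E : Type*}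
    [NormedAddCommGroup E] [NormedSpace ℝ E] [ProperSpace E] (U : Ultrafilter α) {z : α → E}
    (hz : Tendsto (fun k => ‖z k‖) U atTop) :
    ∃ u, ‖u‖ = 1 ∧ Tendsto (fun k => ‖z k‖⁻¹ • z k) U (𝓝 u) := by
  have hsphere : ∀ᶠ k in U, ‖z k‖⁻¹ • z k ∈ Metric.sphere (0 : E) 1 := by
    filter_upwards [hz.eventually_gt_atTop 0] with k hk
    simp [norm_smul, hk.ne']
  obtain ⟨u, hu, hlim⟩ := (isCompact_sphere (0 : E) 1).ultrafilter_le_nhds' (U.map _) hsphere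
  exact ⟨u, by simpa using hu, hlim⟩

theorem ContinuousLinearMap.map_eq_zero_of_tendsto_inv_norm_smul {α E F : Type*}
    [NormedAddCommGroup E] [NormedSpace ℝ E] [NormedAddCommGroup F] [NormedSpace ℝ F]
    (φ : E →L[ℝ] F) {l : Filter α} [l.NeBot] {z : α → E} {u : E} {g : F}
    (hz : Tendsto (fun k => ‖z k‖) l atTop) (hu : Tendsto (fun k => ‖z k‖⁻¹ • z k) l (𝓝 u))
    (hφ : Tendsto (fun k => φ (z k)) l (𝓝 g)) : φ u = 0 := by
  have h0 : Tendsto (fun k => ‖z k‖⁻¹ • φ (z k)) l (𝓝 ((0 : ℝ) • g)) :=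
    hz.inv_tendsto_atTop.smul hφ
  rw [zero_smul] at h0
  exact tendsto_nhds_unique ((φ.continuous.tendsto u).comp hu)
    (by simpa only [Function.comp_def, map_smul] using h0)

theorem Filter.Tendsto.finset_prod_atTop {ι β R : Type*} [CommSemiring R] [PartialOrder R]
    [IsOrderedRing R] {l : Filter β} {f : ι → β → R} {s : Finset ι} (hs : s.Nonempty)
    (h : ∀ i ∈ s, Tendsto (f i) l atTop) : Tendsto (fun x => ∏ i ∈ s, f i x) l atTop := by
  induction hs using Finset.Nonempty.cons_induction with
  | singleton i => simpa using h i (by simp)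
  | cons i s his _ ih =>
    simp only [Finset.prod_cons]
    exact (h i (s.mem_cons_self i)).atTop_mul_atTop₀
      (ih fun j hj => h j (Finset.mem_cons.2 (.inr hj)))

theorem tendsto_norm_prod_pow_atTop {ι α 𝕜 : Type*} [Fintype ι] [NormedField 𝕜] {l : Filter α}
    {g : ι → α → 𝕜} {γ : ι → 𝕜} {e : ι → ℕ} {B : Finset ι}
    (hB : ∀ i ∈ B, Tendsto (g i) l (𝓝 (γ i))) (hγ : ∀ i ∈ B, γ i ≠ 0)
    (hBc : ∀ i ∉ B, Tendsto (g i) l (cobounded 𝕜)) (he : ∀ i ∉ B, e i ≠ 0)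
    (hne : ∃ i, i ∉ B) : Tendsto (fun k => ‖∏ i, g i k ^ e i‖) l atTop := by
  classical
  simp only [← B.prod_mul_prod_compl, norm_mul, norm_prod, norm_pow]
  refine Tendsto.pos_mul_atTop (Finset.prod_pos fun i hi => pow_pos (norm_pos_iff.2 (hγ i hi)) _)
    (tendsto_finsetProd _ fun i hi => (hB i hi).norm.pow _)
    (Tendsto.finset_prod_atTop (hne.imp fun i => Finset.mem_compl.2) fun i hi => ?_)
  rw [Finset.mem_compl] at hi
  exact (tendsto_pow_atTop (he i hi)).comp (tendsto_norm_atTop_iff_cobounded.2 (hBc i hi))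


theorem LinearMap.exists_tendsto_zero_map_eq_sub {α 𝕜 E F : Type*} [NontriviallyNormedField 𝕜]
    [CompleteSpace 𝕜] [NormedAddCommGroup E] [NormedSpace 𝕜 E] [NormedAddCommGroup F]
    [NormedSpace 𝕜 F] [FiniteDimensional 𝕜 F] (A : E →ₗ[𝕜] F) {l : Filter α} [l.NeBot]
    {z : α → E} {g : F}
    (h : Tendsto (fun k => A (z k)) l (𝓝 g)) :
    ∃ w : α → E, Tendsto w l (𝓝 0) ∧ ∀ k, A (w k) = A (z k) - g := by
  have hg : g ∈ range A := (Submodule.closed_of_finiteDimensional _).mem_of_tendsto h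
    (.of_forall fun k => mem_range_self A (z k))
  obtain ⟨B, hB⟩ := A.rangeRestrict.exists_rightInverse_of_surjective A.range_rangeRestrict
  have hAB : ∀ y, A (B y) = y := fun y => congr($(LinearMap.congr_fun hB y).val)
  set y : α → range A := fun k => A.rangeRestrict (z k) - ⟨g, hg⟩
  refine ⟨fun k => B (y k), ?_, fun k => hAB (y k)⟩
  have hy : Tendsto y l (𝓝 0) := by
    rw [tendsto_subtype_rng]
    simpa [y] using h.sub_const g
  have := (B.continuous_of_finiteDimensional.tendsto 0).comp hy
  rwa [map_zero] at this

theorem eq_zero_of_span_eq_top_of_dotProduct_eq_zero {ι n R : Type*} [Fintype n] [CommSemiring R]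
    {a : ι → n → R} {u : n → R} (ha : Submodule.span R (Set.range a) = ⊤)
    (h : ∀ i, a i ⬝ᵥ u = 0) : u = 0 := by
  refine dotProduct_eq_zero u fun w => ?_
  have hw : w ∈ Submodule.span R (Set.range a) := ha ▸ Submodule.mem_top
  rw [dotProduct_comm]
  induction hw using Submodule.span_induction with
  | mem w hw => obtain ⟨i, rfl⟩ := hw; exact h i
  | zero => exact zero_dotProduct u
  | add v w _ _ hv hw => rw [add_dotProduct, hv, hw, add_zero]
  | smul r w _ hw => rw [smul_dotProduct, hw, smul_zero]

open scoped ComplexOrder in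
theorem tendsto_zero_of_eq_smul_star {α ι : Type*} [Fintype ι] {l : Filter α} {z v : α → ι → ℂ}
    {μ : α → ℂ} {u : ι → ℂ} (hu0 : u ≠ 0) (hu : Tendsto (fun k => ‖z k‖⁻¹ • z k) l (𝓝 u))
    (hv : ∀ k, v k = μ k • star (z k)) (hvu : Tendsto (fun k => v k ⬝ᵥ u) l (𝓝 0)) :
    Tendsto v l (𝓝 0) := by
  have hdot : ∀ k, v k ⬝ᵥ u = μ k * ‖z k‖ * (star (‖z k‖⁻¹ • z k) ⬝ᵥ u) := by
    intro k
    rcases eq_or_ne ‖z k‖ 0 with h | h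
    · simp [hv, norm_eq_zero.1 h]
    · have h' : (‖z k‖ : ℂ) ≠ 0 := by exact_mod_cast h
      simp only [hv, star_smul, star_trivial, smul_dotProduct, Complex.real_smul, smul_eq_mul,
        Complex.ofReal_inv]
      field_simp
  have hρ : Tendsto (fun k => star (‖z k‖⁻¹ • z k) ⬝ᵥ u) l (𝓝 (star u ⬝ᵥ u)) :=
    ((continuous_star.dotProduct continuous_const).tendsto u).comp hu
  have hρ0 : star u ⬝ᵥ u ≠ 0 := dotProduct_star_self_eq_zero.not.2 hu0
  have hμ : Tendsto (fun k => μ k * ‖z k‖) l (𝓝 0) := by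
    refine (zero_div (star u ⬝ᵥ u) ▸ hvu.div hρ hρ0).congr' ?_
    filter_upwards [hρ.eventually_ne hρ0] with k hk
    rw [Pi.div_apply, hdot, mul_div_assoc, div_self hk, mul_one]
  rw [tendsto_zero_iff_norm_tendsto_zero]
  simpa [hv, norm_smul, norm_star] using hμ.norm

namespace MvPolynomial

variable {σ K : Type*} [Field K] (x : σ → K) (j : σ)

theorem eval_pderiv_prod {ι : Type*} (s : Finset ι) (q : ι → MvPolynomial σ K)
    (hq : ∀ i ∈ s, eval x (q i) ≠ 0) :
    eval x (pderiv j (∏ i ∈ s, q i))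
      = eval x (∏ i ∈ s, q i) * ∑ i ∈ s, eval x (pderiv j (q i)) / eval x (q i) := by
  classical
  induction s using Finset.induction_on with
  | empty => simp
  | insert i s hi ih =>
    have hqi := hq i (Finset.mem_insert_self i s)
    rw [Finset.prod_insert hi, Finset.sum_insert hi, pderiv_mul, map_add, map_mul, map_mul,
      ih fun k hk => hq k (Finset.mem_insert_of_mem hk), map_mul]
    field_simp

theorem eval_pderiv_pow_div (p : MvPolynomial σ K) (m : ℕ) :
    eval x (pderiv j (p ^ m)) / eval x (p ^ m) = m * eval x (pderiv j p) / eval x p := by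
  rcases m with _ | m
  · simp
  rw [pderiv_pow, Nat.add_sub_cancel]
  simp only [map_mul, map_pow, map_natCast]
  rcases eq_or_ne (eval x p) 0 with hp | hp
  · simp [hp]
  · field_simp
    ring

end MvPolynomial

section Arrangement

variable {N d : ℕ} (a : Fin d → Fin N → ℂ) (b : Fin d → ℂ) (e : Fin d → ℕ)

theorem eval_hypEq (i : Fin d) (x : Fin N → ℂ) : eval x (hypEq a b i) = b i + a i ⬝ᵥ x := by
  simp [hypEq, dotProduct]

theorem pderiv_hypEq (i : Fin d) (j : Fin N) : pderiv j (hypEq a b i) = C (a i j) := by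
  simp [hypEq, pderiv_X, Pi.single_apply]

noncomputable def logGrad (x : Fin N → ℂ) : Fin N → ℂ :=
  ∑ i, ((e i : ℂ) / (b i + a i ⬝ᵥ x)) • a i

theorem logGrad_dotProduct (x w : Fin N → ℂ) :
    logGrad a b e x ⬝ᵥ w = ∑ i, e i * (a i ⬝ᵥ w) / (b i + a i ⬝ᵥ x) := by
  simp only [logGrad, sum_dotProduct, smul_dotProduct, smul_eq_mul, mul_div_right_comm]

variable {a b e}

theorem eval_pderiv_prod_hypEq_pow {x : Fin N → ℂ} (hx : ∀ i, b i + a i ⬝ᵥ x ≠ 0) (j : Fin N) :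
    eval x (pderiv j (∏ i, hypEq a b i ^ e i))
      = eval x (∏ i, hypEq a b i ^ e i) * logGrad a b e x j := by
  rw [eval_pderiv_prod x j _ _ fun i _ => by simpa [eval_hypEq] using pow_ne_zero _ (hx i)]
  congr 1
  simp only [logGrad, Finset.sum_apply, Pi.smul_apply, smul_eq_mul]
  refine Finset.sum_congr rfl fun i _ => ?_
  rw [eval_pderiv_pow_div, pderiv_hypEq, eval_C, eval_hypEq, mul_div_right_comm]

theorem exists_logGrad_eq_smul_star {x : Fin N → ℂ} (hM : x ∈ Mset (∏ i, hypEq a b i ^ e i))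
    (hx : ∀ i, b i + a i ⬝ᵥ x ≠ 0) : ∃ μ : ℂ, logGrad a b e x = μ • star x := by
  obtain ⟨c, hc⟩ := hM
  have hf : eval x (∏ i, hypEq a b i ^ e i) ≠ 0 := by
    simpa [eval_hypEq] using Finset.prod_ne_zero_iff.2 fun i _ => pow_ne_zero (e i) (hx i)
  refine ⟨c / eval x (∏ i, hypEq a b i ^ e i), funext fun j => ?_⟩
  have hj := hc j
  rw [eval_pderiv_prod_hypEq_pow hx] at hj
  rw [Pi.smul_apply, Pi.star_apply, smul_eq_mul, Complex.star_def, div_mul_eq_mul_div,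
    eq_div_iff hf]
  linear_combination hj

variable {α : Type*} {l : Filter α} {z : α → Fin N → ℂ}

theorem tendsto_logGrad_zero {u : Fin N → ℂ} (hM : ∀ k, z k ∈ Mset (∏ i, hypEq a b i ^ e i))
    (hX : ∀ k i, b i + a i ⬝ᵥ z k ≠ 0) (hu0 : u ≠ 0)
    (hu : Tendsto (fun k => ‖z k‖⁻¹ • z k) l (𝓝 u))
    (h : ∀ i, a i ⬝ᵥ u = 0 ∨ Tendsto (fun k => b i + a i ⬝ᵥ z k) l (cobounded ℂ)) :
    Tendsto (fun k => logGrad a b e (z k)) l (𝓝 0) := by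
  choose μ hμ using fun k => exists_logGrad_eq_smul_star (hM k) (hX k)
  refine tendsto_zero_of_eq_smul_star hu0 hu hμ ?_
  simp only [logGrad_dotProduct]
  rw [← Finset.sum_const_zero (s := (Finset.univ : Finset (Fin d))) (M := ℂ)]
  refine tendsto_finsetSum _ fun i _ => ?_
  rcases h i with hi | hi
  · simpa [hi] using tendsto_const_nhds
  · simpa [div_eq_mul_inv, Function.comp_def] using
      (tendsto_const_nhds (x := (e i : ℂ) * (a i ⬝ᵥ u))).mul (tendsto_inv₀_cobounded.comp hi)

theorem tendsto_logGrad_dotProduct {w : α → Fin N → ℂ} {B : Finset (Fin d)} {γ : Fin d → ℂ}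
    (hX : ∀ k i, b i + a i ⬝ᵥ z k ≠ 0)
    (hB : ∀ i ∈ B, Tendsto (fun k => b i + a i ⬝ᵥ z k) l (𝓝 (γ i)))
    (hBc : ∀ i ∉ B, Tendsto (fun k => b i + a i ⬝ᵥ z k) l (cobounded ℂ))
    (hw : Tendsto w l (𝓝 0)) (hwB : ∀ k, ∀ i ∈ B, a i ⬝ᵥ w k = b i + a i ⬝ᵥ z k - γ i) :
    Tendsto (fun k => logGrad a b e (z k) ⬝ᵥ w k) l (𝓝 (∑ i ∈ B with γ i = 0, (e i : ℂ))) := by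
  classical
  have hsum : ∑ i ∈ B with γ i = 0, (e i : ℂ) = ∑ i, if i ∈ B ∧ γ i = 0 then (e i : ℂ) else 0 := by
    simp only [← Finset.sum_filter]
    congr 1
    ext i
    simp
  simp only [logGrad_dotProduct, hsum]
  refine tendsto_finsetSum _ fun i _ => ?_
  by_cases hi : i ∈ B
  · have hterm : ∀ k, e i * (a i ⬝ᵥ w k) / (b i + a i ⬝ᵥ z k)
        = e i * (1 - γ i / (b i + a i ⬝ᵥ z k)) := fun k => by
      rw [hwB k i hi]; field_simp [hX k i]
    simp only [hterm]
    by_cases hγ : γ i = 0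
    · simpa [hi, hγ] using tendsto_const_nhds
    · simpa [hi, hγ] using ((tendsto_const_nhds (x := (1 : ℂ)).sub
        ((tendsto_const_nhds (x := γ i)).div (hB i hi) hγ)).const_mul (e i : ℂ))
  · have hdot : Tendsto (fun k => a i ⬝ᵥ w k) l (𝓝 0) := by
      simpa [Function.comp_def] using
        ((continuous_const.dotProduct continuous_id).tendsto 0).comp hw
    simpa [hi, div_eq_mul_inv] using
      ((hdot.const_mul (e i : ℂ)).mul (tendsto_inv₀_cobounded.comp (hBc i hi)))

theorem sum_filter_eq_zero_of_tendsto_logGrad [l.NeBot] {B : Finset (Fin d)}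
    {γ : Fin d → ℂ} (hX : ∀ k i, b i + a i ⬝ᵥ z k ≠ 0)
    (hB : ∀ i ∈ B, Tendsto (fun k => b i + a i ⬝ᵥ z k) l (𝓝 (γ i)))
    (hBc : ∀ i ∉ B, Tendsto (fun k => b i + a i ⬝ᵥ z k) l (cobounded ℂ))
    (hv : Tendsto (fun k => logGrad a b e (z k)) l (𝓝 0)) :
    ∑ i ∈ B with γ i = 0, e i = 0 := by
  let A : (Fin N → ℂ) →ₗ[ℂ] B → ℂ := Matrix.mulVecLin (Matrix.of fun i : B => a i)
  have hA : Tendsto (fun k => A (z k)) l (𝓝 fun i => γ i - b i) :=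
    tendsto_pi_nhds.2 fun i => by simpa [A, Matrix.mulVec] using (hB i i.2).sub_const (b i)
  obtain ⟨w, hw, hwA⟩ := A.exists_tendsto_zero_map_eq_sub hA
  have hwB : ∀ k, ∀ i ∈ B, a i ⬝ᵥ w k = b i + a i ⬝ᵥ z k - γ i := fun k i hi => by
    have := congr_fun (hwA k) ⟨i, hi⟩
    simp only [A, Matrix.mulVecLin_apply, Matrix.mulVec, Matrix.of_apply, Pi.sub_apply] at this
    rw [this]
    ring
  have h0 : Tendsto (fun k => logGrad a b e (z k) ⬝ᵥ w k) l (𝓝 0) := by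
    simpa [Function.comp_def] using
      ((continuous_fst.dotProduct continuous_snd).tendsto (0, 0)).comp (hv.prodMk_nhds hw)
  exact_mod_cast tendsto_nhds_unique (tendsto_logGrad_dotProduct hX hB hBc hw hwB) h0

theorem not_tendsto_eval_prod_hypEq_pow {U : Ultrafilter α}
    (hess : Submodule.span ℂ (Set.range a) = ⊤) (he : ∀ i, 0 < e i)
    (hM : ∀ k, z k ∈ Mset (∏ i, hypEq a b i ^ e i)) (hX : ∀ k i, b i + a i ⬝ᵥ z k ≠ 0)
    (hz : Tendsto (fun k => ‖z k‖) U atTop) (c : ℂ) :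
    ¬ Tendsto (fun k => eval (z k) (∏ i, hypEq a b i ^ e i)) U (𝓝 c) := by
  intro hF
  obtain ⟨u, hu1, hu⟩ := U.exists_norm_eq_one_tendsto_inv_norm_smul hz
  have hu0 : u ≠ 0 := norm_ne_zero_iff.1 (by simp [hu1])
  obtain ⟨B, γ, hB, hBc⟩ :=
    U.exists_finset_tendsto_nhds_and_tendsto_cobounded fun i k => b i + a i ⬝ᵥ z k
  have horth : ∀ i ∈ B, a i ⬝ᵥ u = 0 := fun i hi => by
    let φ := LinearMap.toContinuousLinearMap (dotProductBilin ℝ ℝ (a i))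
    simpa [φ] using φ.map_eq_zero_of_tendsto_inv_norm_smul hz hu (g := γ i - b i)
      (by simpa [φ] using (hB i hi).sub_const (b i))
  have hunb : ∃ j, j ∉ B := by
    by_contra! hB'
    exact hu0 (eq_zero_of_span_eq_top_of_dotProduct_eq_zero hess fun i => horth i (hB' i))
  obtain ⟨i, hi, hγi⟩ : ∃ i ∈ B, γ i = 0 := by
    by_contra! hγ
    refine not_tendsto_atTop_of_tendsto_nhds hF.norm ?_
    simpa [eval_hypEq] using tendsto_norm_prod_pow_atTop hB hγ hBc (fun i _ => (he i).ne') hunb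
  have hv := tendsto_logGrad_zero hM hX hu0 hu fun i => (em (i ∈ B)).imp (horth i) (hBc i)
  exact (he i).ne' (Finset.sum_eq_zero_iff.1 (sum_filter_eq_zero_of_tendsto_logGrad hX hB hBc hv)
    i (by simp [hi, hγi]))

end Arrangement

theorem stmt2_general (n d : ℕ) (a : Fin d → Fin (n + 1) → ℂ) (b : Fin d → ℂ) (e : Fin d → ℕ)
    (hess : Submodule.span ℂ (Set.range a) = (⊤ : Submodule ℂ (Fin (n + 1) → ℂ)))
    (he : ∀ i, 0 < e i) :
    ∀ z : ℕ → (Fin (n + 1) → ℂ),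
      (∀ k, z k ∈ Mset (∏ i : Fin d, hypEq a b i ^ e i) ∧
        z k ∉ ⋃ i : Fin d, {x : Fin (n + 1) → ℂ | MvPolynomial.eval x (hypEq a b i) = 0}) →
      Tendsto (fun k => ‖z k‖) atTop atTop →
      Tendsto (fun k => ‖MvPolynomial.eval (z k) (∏ i : Fin d, hypEq a b i ^ e i)‖)
        atTop atTop := by
  intro z hz hnorm
  have hX : ∀ k i, b i + a i ⬝ᵥ z k ≠ 0 := fun k => by
    simpa [eval_hypEq] using (hz k).2
  rw [tendsto_iff_ultrafilter]
  intro U hU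
  rcases U.tendsto_nhds_or_tendsto_cobounded fun k => eval (z k) (∏ i, hypEq a b i ^ e i) with
    ⟨c, hc⟩ | h
  · exact absurd hc
      (not_tendsto_eval_prod_hypEq_pow hess he (fun k => (hz k).1) hX (hnorm.mono_left hU) c)
  · exact tendsto_norm_atTop_iff_cobounded.2 h

/-- for an essential affine arrangement of `d` distinct hyperplanes `ℓ i = 0` in
`ℂ^{n+1}` and positive multiplicities `e i`, the polynomial `f_e = ∏ i, ℓ i ^ e i` is
`M₀`-tame provided `n > 1`, or `n = 1` and `d_e = ∑ e i > d`: along any sequence of points of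
`M(f_e) \ X` (where `X = ∪ H i`) with `‖z^k‖ → ∞` one has `|f_e(z^k)| → ∞`. -/
theorem stmt2 (n d : ℕ) (a : Fin d → Fin (n + 1) → ℂ) (b : Fin d → ℂ) (e : Fin d → ℕ)
    (ha : ∀ i, a i ≠ 0)
    (hdist : ∀ i j : Fin d, i ≠ j →
      {x : Fin (n + 1) → ℂ | MvPolynomial.eval x (hypEq a b i) = 0} ≠
      {x : Fin (n + 1) → ℂ | MvPolynomial.eval x (hypEq a b j) = 0})
    (hess : Submodule.span ℂ (Set.range a) = (⊤ : Submodule ℂ (Fin (n + 1) → ℂ)))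
    (he : ∀ i, 0 < e i)
    (hcond : 1 < n ∨ (n = 1 ∧ d < ∑ i : Fin d, e i)) :
    ∀ z : ℕ → (Fin (n + 1) → ℂ),
      (∀ k, z k ∈ Mset (∏ i : Fin d, hypEq a b i ^ e i) ∧
        z k ∉ ⋃ i : Fin d, {x : Fin (n + 1) → ℂ | MvPolynomial.eval x (hypEq a b i) = 0}) →
      Tendsto (fun k => ‖z k‖) atTop atTop →
      Tendsto (fun k => ‖MvPolynomial.eval (z k) (∏ i : Fin d, hypEq a b i ^ e i)‖)
        atTop atTop :=
  stmt2_general n d a b e hess he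
end

section
/- Let g ∈ ℂ[x_0, …, x_n] be a polynomial and let U : ℂ^{n+1} → ℂ^{n+1} be a unitary linear map (preserving the standard Hermitian inner product). If g is M_0-tame, then the polynomial g∘U (the polynomial whose associated function is x ↦ g(U x)) is also M_0-tame. -/
/-!
`U` carries `M(g ∘ U)` into `M(g)`: by the chain rule `∇(g ∘ U)(x) ⬝ y = ∇g(U x) ⬝ U y`,
and since `U` preserves the Hermitian form, `c • x̄ ⬝ y = c • conj (U x) ⬝ U y`; as `U` is onto,
`∇g(U x) = c • conj (U x)`. Moreover `U` is injective, hence anti-Lipschitz, so `‖U z‖ → ∞`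
whenever `‖z‖ → ∞`, and tameness of `g` along `U z` is tameness of `g ∘ U` along `z`.
-/

open Filter

/-- `g` is M₀-tame: along any sequence in `M(g) \ g⁻¹(0)` with `‖z^k‖ → ∞` one has
`|g(z^k)| → ∞`. -/
def M0Tame {N : ℕ} (g : MvPolynomial (Fin N) ℂ) : Prop :=
  ∀ z : ℕ → (Fin N → ℂ), (∀ k, z k ∈ Mset g ∧ MvPolynomial.eval (z k) g ≠ 0) →
    Tendsto (fun k => ‖z k‖) atTop atTop →
    Tendsto (fun k => ‖MvPolynomial.eval (z k) g‖) atTop atTop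

namespace MvPolynomial

section Gradient

variable {σ R : Type*} [CommSemiring R]

noncomputable def evalGradient (p : MvPolynomial σ R) (x : σ → R) : σ → R :=
  fun i => eval x (pderiv i p)

theorem evalGradient_C (a : R) (x : σ → R) : evalGradient (C a) x = 0 := by
  ext i
  simp [evalGradient]

theorem evalGradient_add (p q : MvPolynomial σ R) (x : σ → R) :
    evalGradient (p + q) x = evalGradient p x + evalGradient q x := by
  ext i
  simp [evalGradient]

theorem evalGradient_mul_X [DecidableEq σ] (p : MvPolynomial σ R) (i : σ) (x : σ → R) :
    evalGradient (p * X i) x = x i • evalGradient p x + Pi.single i (eval x p) := by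
  ext j
  rcases eq_or_ne j i with rfl | hji
  · simp [evalGradient, add_comm]
  · simp [evalGradient, hji, hji.symm]

end Gradient

variable {σ τ 𝕜 : Type*} [Fintype σ] [Fintype τ] [NontriviallyNormedField 𝕜]

theorem hasDerivAt_eval_add_smul (p : MvPolynomial σ 𝕜) (x y : σ → 𝕜) :
    HasDerivAt (fun t : 𝕜 => eval (x + t • y) p) (evalGradient p x ⬝ᵥ y) 0 := by
  classical
  induction p using MvPolynomial.induction_on with
  | C a => simpa [evalGradient_C] using hasDerivAt_const (0 : 𝕜) a
  | add p q hp hq =>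
    simp only [map_add]
    exact (hp.add hq).congr_deriv (by rw [evalGradient_add, add_dotProduct])
  | mul_X p i hp =>
    have hline : HasDerivAt (fun t : 𝕜 => x i + t * y i) (y i) 0 := by
      simpa using ((hasDerivAt_id (0 : 𝕜)).mul_const (y i)).const_add (x i)
    simp only [map_mul, eval_X, Pi.add_apply, Pi.smul_apply, smul_eq_mul]
    refine (hp.mul hline).congr_deriv ?_
    simp [evalGradient_mul_X, add_dotProduct, smul_dotProduct, mul_comm]

theorem evalGradient_dotProduct_of_eval_eq_comp {g : MvPolynomial σ 𝕜} {h : MvPolynomial τ 𝕜}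
    (U : (τ → 𝕜) →ₗ[𝕜] (σ → 𝕜)) (hh : ∀ x, eval x h = eval (U x) g) (x y : τ → 𝕜) :
    evalGradient h x ⬝ᵥ y = evalGradient g (U x) ⬝ᵥ U y := by
  have hline : (fun t : 𝕜 => eval (x + t • y) h) = fun t => eval (U x + t • U y) g := by
    ext t
    rw [hh, map_add, map_smul]
  exact (hasDerivAt_eval_add_smul h x y).unique (hline ▸ hasDerivAt_eval_add_smul g (U x) (U y))

end MvPolynomial

open MvPolynomial
open scoped ComplexOrder

theorem LinearMap.injective_of_star_dotProduct_map_self {R m n : Type*} [Fintype m] [Fintype n]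
    [CommRing R] [PartialOrder R] [StarRing R] [StarOrderedRing R] [NoZeroDivisors R]
    (U : (m → R) →ₗ[R] (n → R)) (hU : ∀ x, star (U x) ⬝ᵥ U x = star x ⬝ᵥ x) :
    Function.Injective U := by
  refine (injective_iff_map_eq_zero U).2 fun x hx => ?_
  rw [← dotProduct_star_self_eq_zero, ← hU, hx, star_zero, zero_dotProduct]

theorem tendsto_norm_map_atTop_of_injective {𝕜 E F α : Type*} [NontriviallyNormedField 𝕜]
    [CompleteSpace 𝕜] [NormedAddCommGroup E] [NormedSpace 𝕜 E] [FiniteDimensional 𝕜 E]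
    [NormedAddCommGroup F] [NormedSpace 𝕜 F] {f : E →ₗ[𝕜] F} (hf : Function.Injective f)
    {l : Filter α} {z : α → E} (hz : Tendsto (fun k => ‖z k‖) l atTop) :
    Tendsto (fun k => ‖f (z k)‖) l atTop := by
  obtain ⟨K, -, hK⟩ := f.exists_antilipschitzWith (LinearMap.ker_eq_bot.2 hf)
  exact tendsto_norm_atTop_iff_cobounded.2
    (hK.tendsto_cobounded.comp (tendsto_norm_atTop_iff_cobounded.1 hz))

theorem mem_Mset_iff {N : ℕ} {g : MvPolynomial (Fin N) ℂ} {x : Fin N → ℂ} :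
    x ∈ Mset g ↔ ∃ c : ℂ, evalGradient g x = c • star x := by
  simp [Mset, evalGradient, _root_.funext_iff]

theorem map_mem_Mset_of_star_dotProduct_map {N : ℕ} {g h : MvPolynomial (Fin N) ℂ}
    (U : (Fin N → ℂ) →ₗ[ℂ] (Fin N → ℂ)) (hU : ∀ x y, star (U x) ⬝ᵥ U y = star x ⬝ᵥ y)
    (hh : ∀ x, eval x h = eval (U x) g) {x : Fin N → ℂ} (hx : x ∈ Mset h) : U x ∈ Mset g := by
  have hsurj : Function.Surjective U := LinearMap.injective_iff_surjective.1
    (U.injective_of_star_dotProduct_map_self fun x => hU x x)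
  obtain ⟨c, hc⟩ := mem_Mset_iff.1 hx
  refine mem_Mset_iff.2 ⟨c, dotProduct_eq _ _ fun w => ?_⟩
  obtain ⟨y, rfl⟩ := hsurj w
  calc evalGradient g (U x) ⬝ᵥ U y = evalGradient h x ⬝ᵥ y :=
        (evalGradient_dotProduct_of_eval_eq_comp U hh x y).symm
    _ = c * (star x ⬝ᵥ y) := by rw [hc, smul_dotProduct, smul_eq_mul]
    _ = (c • star (U x)) ⬝ᵥ U y := by rw [← hU, smul_dotProduct, smul_eq_mul]

/-- If `g` is an M₀-tame polynomial in `n+1` variables and `U` is a unitary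
linear map of `ℂ^{n+1}` (preserving the standard Hermitian inner product), then the polynomial
`g ∘ U` (i.e. the polynomial `h` whose associated function is `x ↦ g (U x)`) is M₀-tame. -/
theorem stmt3 (n : ℕ) (g h : MvPolynomial (Fin (n + 1)) ℂ)
    (U : (Fin (n + 1) → ℂ) →ₗ[ℂ] (Fin (n + 1) → ℂ))
    (hU : ∀ x y : Fin (n + 1) → ℂ,
      ∑ j : Fin (n + 1), (starRingEnd ℂ) (U x j) * U y j =
      ∑ j : Fin (n + 1), (starRingEnd ℂ) (x j) * y j)
    (hh : ∀ x : Fin (n + 1) → ℂ, MvPolynomial.eval x h = MvPolynomial.eval (U x) g)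
    (hg : M0Tame g) : M0Tame h := by
  have hU' : ∀ x y, star (U x) ⬝ᵥ U y = star x ⬝ᵥ y := hU
  have hinj : Function.Injective U := U.injective_of_star_dotProduct_map_self fun x => hU' x x
  intro z hz hz_norm
  have hUz_norm : Tendsto (fun k => ‖U (z k)‖) atTop atTop :=
    tendsto_norm_map_atTop_of_injective hinj hz_norm
  have hUz : ∀ k, U (z k) ∈ Mset g ∧ eval (U (z k)) g ≠ 0 := fun k =>
    ⟨map_mem_Mset_of_star_dotProduct_map U hU' hh (hz k).1, hh (z k) ▸ (hz k).2⟩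
  simpa only [hh] using hg (fun k => U (z k)) hUz hUz_norm
end
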